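/- arXiv:2109.13350 — 2 statements merged into one kernel-verified Lean document; each statement's English description precedes it below -/
import Mathlib

section
/- If T is a bounded linear operator on an infinite-dimensional complex Banach space such that σ(T)\σ_bf(T) = Π_a(T) (T is class (gab_e)), then σ(T)\σ_e(T) = Π_a^0(T) (T is class (ab_e)). -/
open Filter Topology

variable {X : Type*} [NormedAddCommGroup X] [NormedSpace ℂ X] [CompleteSpace X]

/-- `S` is a Fredholm operator. -/
def IsFredholm (S : X →L[ℂ] X) : Prop :=
  FiniteDimensional ℂ (LinearMap.ker (S : X →ₗ[ℂ] X)) ∧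
  IsClosed ((LinearMap.range (S : X →ₗ[ℂ] X) : Submodule ℂ X) : Set X) ∧
  FiniteDimensional ℂ (X ⧸ LinearMap.range (S : X →ₗ[ℂ] X))

/-- `S` is a Weyl operator: Fredholm of index zero. -/
def IsWeyl (S : X →L[ℂ] X) : Prop :=
  IsFredholm S ∧
  Module.finrank ℂ (LinearMap.ker (S : X →ₗ[ℂ] X)) = Module.finrank ℂ (X ⧸ LinearMap.range (S : X →ₗ[ℂ] X))

/-- `S` is a B-Fredholm operator: for some `n`, `R(S^n)` is closed and the restriction
`S_[n] : R(S^n) → R(S^n)` is Fredholm (its kernel is `ker S ⊓ R(S^n)`, its range is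
`R(S^(n+1))`). -/
def IsBFredholm (S : X →L[ℂ] X) : Prop :=
  ∃ n : ℕ, IsClosed ((LinearMap.range (↑(S ^ n) : X →ₗ[ℂ] X) : Submodule ℂ X) : Set X) ∧
    IsClosed ((LinearMap.range (↑(S ^ (n + 1)) : X →ₗ[ℂ] X) : Submodule ℂ X) : Set X) ∧
    FiniteDimensional ℂ ↥(LinearMap.ker (S : X →ₗ[ℂ] X) ⊓ LinearMap.range (↑(S ^ n) : X →ₗ[ℂ] X)) ∧
    FiniteDimensional ℂ (↥(LinearMap.range (↑(S ^ n) : X →ₗ[ℂ] X)) ⧸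
      Submodule.comap (LinearMap.range (↑(S ^ n) : X →ₗ[ℂ] X)).subtype (LinearMap.range (↑(S ^ (n + 1)) : X →ₗ[ℂ] X)))

/-- `S` is a B-Weyl operator: B-Fredholm of index zero. -/
def IsBWeyl (S : X →L[ℂ] X) : Prop :=
  ∃ n : ℕ, IsClosed ((LinearMap.range (↑(S ^ n) : X →ₗ[ℂ] X) : Submodule ℂ X) : Set X) ∧
    IsClosed ((LinearMap.range (↑(S ^ (n + 1)) : X →ₗ[ℂ] X) : Submodule ℂ X) : Set X) ∧
    FiniteDimensional ℂ ↥(LinearMap.ker (S : X →ₗ[ℂ] X) ⊓ LinearMap.range (↑(S ^ n) : X →ₗ[ℂ] X)) ∧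
    FiniteDimensional ℂ (↥(LinearMap.range (↑(S ^ n) : X →ₗ[ℂ] X)) ⧸
      Submodule.comap (LinearMap.range (↑(S ^ n) : X →ₗ[ℂ] X)).subtype (LinearMap.range (↑(S ^ (n + 1)) : X →ₗ[ℂ] X))) ∧
    Module.finrank ℂ ↥(LinearMap.ker (S : X →ₗ[ℂ] X) ⊓ LinearMap.range (↑(S ^ n) : X →ₗ[ℂ] X)) =
      Module.finrank ℂ (↥(LinearMap.range (↑(S ^ n) : X →ₗ[ℂ] X)) ⧸
        Submodule.comap (LinearMap.range (↑(S ^ n) : X →ₗ[ℂ] X)).subtype (LinearMap.range (↑(S ^ (n + 1)) : X →ₗ[ℂ] X)))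

/-- `S` has finite ascent. -/
def HasFiniteAscent (S : X →L[ℂ] X) : Prop :=
  ∃ n : ℕ, LinearMap.ker (↑(S ^ n) : X →ₗ[ℂ] X) = LinearMap.ker (↑(S ^ (n + 1)) : X →ₗ[ℂ] X)

/-- `S` has finite descent. -/
def HasFiniteDescent (S : X →L[ℂ] X) : Prop :=
  ∃ n : ℕ, LinearMap.range (↑(S ^ n) : X →ₗ[ℂ] X) = LinearMap.range (↑(S ^ (n + 1)) : X →ₗ[ℂ] X)

/-- The approximate point spectrum of `T`: points `λ` where `T - λ` is not bounded below. -/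
def sigma_a (T : X →L[ℂ] X) : Set ℂ :=
  {l : ℂ | ¬ ∃ c > (0 : ℝ), ∀ x : X, c * ‖x‖ ≤ ‖(T - l • 1) x‖}

/-- The essential spectrum of `T`. -/
def sigma_e (T : X →L[ℂ] X) : Set ℂ := {l : ℂ | ¬ IsFredholm (T - l • 1)}

/-- The Weyl spectrum of `T`. -/
def sigma_w (T : X →L[ℂ] X) : Set ℂ := {l : ℂ | ¬ IsWeyl (T - l • 1)}

/-- The B-Fredholm spectrum of `T`. -/
def sigma_bf (T : X →L[ℂ] X) : Set ℂ := {l : ℂ | ¬ IsBFredholm (T - l • 1)}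

/-- The B-Weyl spectrum of `T`. -/
def sigma_bw (T : X →L[ℂ] X) : Set ℂ := {l : ℂ | ¬ IsBWeyl (T - l • 1)}

/-- The poles of the resolvent of `T`: spectral points with finite ascent and descent. -/
def poles (T : X →L[ℂ] X) : Set ℂ :=
  {l : ℂ | l ∈ spectrum ℂ T ∧ HasFiniteAscent (T - l • 1) ∧ HasFiniteDescent (T - l • 1)}

/-- The poles of `T` of finite rank. -/
def poles0 (T : X →L[ℂ] X) : Set ℂ :=
  {l : ℂ | l ∈ poles T ∧ FiniteDimensional ℂ (LinearMap.ker (↑(T - l • 1) : X →ₗ[ℂ] X))}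

/-- The left poles of `T`: points `λ ∈ σ_a(T)` with `p = p(T-λ) < ∞` and `R((T-λ)^(p+1))`
closed. -/
def leftPoles (T : X →L[ℂ] X) : Set ℂ :=
  {l : ℂ | l ∈ sigma_a T ∧ ∃ p : ℕ,
    LinearMap.ker (↑((T - l • 1) ^ p) : X →ₗ[ℂ] X) = LinearMap.ker (↑((T - l • 1) ^ (p + 1)) : X →ₗ[ℂ] X) ∧
    (∀ m : ℕ, m < p → LinearMap.ker (↑((T - l • 1) ^ m) : X →ₗ[ℂ] X) ≠ LinearMap.ker (↑((T - l • 1) ^ (m + 1)) : X →ₗ[ℂ] X)) ∧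
    IsClosed ((LinearMap.range (↑((T - l • 1) ^ (p + 1)) : X →ₗ[ℂ] X) : Submodule ℂ X) : Set X)}

/-- The left poles of `T` of finite rank. -/
def leftPoles0 (T : X →L[ℂ] X) : Set ℂ :=
  {l : ℂ | l ∈ leftPoles T ∧ FiniteDimensional ℂ (LinearMap.ker (↑(T - l • 1) : X →ₗ[ℂ] X))}

/-- The isolated points of a subset of `ℂ`. -/
def isoPts (A : Set ℂ) : Set ℂ := {l : ℂ | l ∈ A ∧ ¬ AccPt l (𝓟 A)}

/-- `E(T)`: isolated spectral points that are eigenvalues. -/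
def Eset (T : X →L[ℂ] X) : Set ℂ :=
  {l : ℂ | l ∈ isoPts (spectrum ℂ T) ∧ LinearMap.ker (↑(T - l • 1) : X →ₗ[ℂ] X) ≠ ⊥}

/-- `E⁰(T)`: isolated spectral points that are eigenvalues of finite multiplicity. -/
def Eset0 (T : X →L[ℂ] X) : Set ℂ :=
  {l : ℂ | l ∈ isoPts (spectrum ℂ T) ∧ LinearMap.ker (↑(T - l • 1) : X →ₗ[ℂ] X) ≠ ⊥ ∧
    FiniteDimensional ℂ (LinearMap.ker (↑(T - l • 1) : X →ₗ[ℂ] X))}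

/-- `E_a(T)`: isolated points of the approximate point spectrum that are eigenvalues. -/
def Ea (T : X →L[ℂ] X) : Set ℂ :=
  {l : ℂ | l ∈ isoPts (sigma_a T) ∧ LinearMap.ker (↑(T - l • 1) : X →ₗ[ℂ] X) ≠ ⊥}

/-- `E_a⁰(T)`: isolated points of `σ_a(T)` that are eigenvalues of finite multiplicity. -/
def Ea0 (T : X →L[ℂ] X) : Set ℂ :=
  {l : ℂ | l ∈ isoPts (sigma_a T) ∧ LinearMap.ker (↑(T - l • 1) : X →ₗ[ℂ] X) ≠ ⊥ ∧
    FiniteDimensional ℂ (LinearMap.ker (↑(T - l • 1) : X →ₗ[ℂ] X))}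

/-!
A Fredholm operator is B-Fredholm (take `n = 0`), so `σ(T) \ σ_e(T) ⊆ σ(T) \ σ_bf(T) = Π_a(T)`,
and its points have finite-dimensional kernel. Conversely, at a left pole of finite rank
`T - λ` is B-Fredholm with finite-dimensional kernel, and such an operator is Fredholm: since `S`
maps `R(S^j)` onto `R(S^(j+1))` with finite-dimensional kernel, finite codimension of `R(S^(j+1))`
in `R(S^j)` propagates down from `j = n` to `j = 0`; finally a range of finite codimension is
closed by the open mapping theorem.
-/

section ClosedRange

variable {𝕜 E F : Type*} [NontriviallyNormedField 𝕜] [CompleteSpace 𝕜]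
  [NormedAddCommGroup E] [NormedSpace 𝕜 E] [CompleteSpace E]
  [NormedAddCommGroup F] [NormedSpace 𝕜 F] [CompleteSpace F]

theorem ContinuousLinearMap.isClosed_range_of_finiteDimensional_quotient (S : E →L[𝕜] F)
    [FiniteDimensional 𝕜 (F ⧸ LinearMap.range (S : E →ₗ[𝕜] F))] :
    IsClosed ((LinearMap.range (S : E →ₗ[𝕜] F) : Submodule 𝕜 F) : Set F) := by
  obtain ⟨G, hG⟩ := Submodule.exists_isCompl (LinearMap.range (S : E →ₗ[𝕜] F))
  have : FiniteDimensional 𝕜 G := (Submodule.quotientEquivOfIsCompl _ _ hG).finiteDimensional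
  have : CompleteSpace G := FiniteDimensional.complete 𝕜 G
  -- `(x, g) ↦ S x + g` is onto, hence a quotient map, and `range S` pulls back to `E × {0}`.
  let Φ : (E × G) →L[𝕜] F := S.comp (.fst 𝕜 E G) + G.subtypeL.comp (.snd 𝕜 E G)
  have hΦ : Function.Surjective Φ := by
    intro y
    obtain ⟨_, ⟨x, rfl⟩, g, hg, rfl⟩ :=
      Submodule.mem_sup.mp (hG.sup_eq_top ▸ Submodule.mem_top : y ∈ _ ⊔ G)
    exact ⟨(x, ⟨g, hg⟩), rfl⟩
  have hpre : Φ ⁻¹' (LinearMap.range (S : E →ₗ[𝕜] F) : Set F) = Prod.snd ⁻¹' {0} := by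
    ext ⟨x, g⟩
    have hmem : S x + g ∈ LinearMap.range (S : E →ₗ[𝕜] F) ↔
        (g : F) ∈ LinearMap.range (S : E →ₗ[𝕜] F) :=
      Submodule.add_mem_iff_right _ ⟨x, rfl⟩
    simp only [Set.mem_preimage, SetLike.mem_coe, Set.mem_singleton_iff]
    refine hmem.trans ⟨fun hg => ?_, fun hg => hg ▸ Submodule.zero_mem _⟩
    have hbot : (g : F) ∈ (⊥ : Submodule 𝕜 F) :=
      hG.inf_eq_bot ▸ (⟨hg, g.2⟩ : (g : F) ∈ _ ⊓ G)
    exact Subtype.ext hbot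
  have hquot : IsQuotientMap Φ := (Φ.isOpenMap hΦ).isQuotientMap Φ.continuous hΦ
  rw [← hquot.isCoinducing.isClosed_preimage, hpre]
  exact isClosed_singleton.preimage continuous_snd

end ClosedRange

section RelativeCodimension

open Submodule LinearMap

variable {K V W : Type*} [DivisionRing K] [AddCommGroup V] [Module K V]
  [AddCommGroup W] [Module K W]

theorem Submodule.finiteDimensional_quotient_comap_subtype_iff (p q : Submodule K V) :
    FiniteDimensional K (p ⧸ comap p.subtype q) ↔ FiniteDimensional K (map q.mkQ p) :=
  Module.Finite.equiv_iff <|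
    (quotEquivOfEq _ _ (by rw [ker_comp, ker_mkQ])).trans <|
      (q.mkQ ∘ₗ p.subtype).quotKerEquivRange.trans <|
        LinearEquiv.ofEq _ _ (by rw [range_comp, range_subtype])

theorem Submodule.finiteDimensional_map_mkQ_of_map (f : V →ₗ[K] W) [FiniteDimensional K (ker f)]
    (p q : Submodule K V) (h : FiniteDimensional K (map (map f q).mkQ (map f p))) :
    FiniteDimensional K (map q.mkQ p) := by
  let fbar := q.mapQ (map f q) f (le_comap_map f q)
  have himage : map fbar (map q.mkQ p) = map (map f q).mkQ (map f p) := by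
    rw [← map_comp, mapQ_mkQ, map_comp]
  have hker : ker fbar = map q.mkQ (ker f) := by
    rw [ker_mapQ, comap_map_eq, map_sup, mkQ_map_self, bot_sup_eq]
  refine .of_fg (fg_of_fg_map_of_fg_inf_ker fbar ?_ ?_)
  · rw [himage]
    exact Module.Finite.iff_fg.mp h
  · have : FiniteDimensional K (ker fbar) := hker ▸ Module.Finite.map _ _
    exact Module.Finite.iff_fg.mp (finiteDimensional_of_le inf_le_right)

theorem LinearMap.range_pow_succ (f : V →ₗ[K] V) (n : ℕ) :
    range (f ^ (n + 1)) = map f (range (f ^ n)) := by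
  rw [pow_succ', Module.End.mul_eq_comp, range_comp]

theorem LinearMap.finiteDimensional_quotient_range_of_range_pow (f : V →ₗ[K] V)
    [FiniteDimensional K (ker f)] (n : ℕ)
    (h : FiniteDimensional K
      (range (f ^ n) ⧸ comap (range (f ^ n)).subtype (range (f ^ (n + 1))))) :
    FiniteDimensional K (V ⧸ range f) := by
  rw [finiteDimensional_quotient_comap_subtype_iff] at h
  induction n with
  | zero =>
    rw [pow_zero, pow_one, Module.End.one_eq_id, range_id, Submodule.map_top, range_mkQ] at h
    exact topEquiv.finiteDimensional
  | succ n ih =>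
    refine ih (finiteDimensional_map_mkQ_of_map f _ _ ?_)
    rwa [← range_pow_succ, ← range_pow_succ]

end RelativeCodimension

omit [CompleteSpace X] in
theorem IsFredholm.isBFredholm {S : X →L[ℂ] X} (hS : IsFredholm S) : IsBFredholm S := by
  obtain ⟨hker, hclosed, hcoker⟩ := hS
  have hrange : LinearMap.range (↑(S ^ 0) : X →ₗ[ℂ] X) = ⊤ := by
    rw [pow_zero, ContinuousLinearMap.one_def, ContinuousLinearMap.coe_id, LinearMap.range_id]
  refine ⟨0, ?_, ?_, ?_, ?_⟩
  · rw [hrange]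
    exact isClosed_univ
  · rwa [zero_add, pow_one]
  · rwa [hrange, inf_top_eq]
  · rw [Submodule.finiteDimensional_quotient_comap_subtype_iff, hrange, Submodule.map_top,
      Submodule.range_mkQ, zero_add, pow_one]
    exact Submodule.topEquiv.symm.finiteDimensional

theorem IsBFredholm.isFredholm {S : X →L[ℂ] X} (hS : IsBFredholm S)
    (hker : FiniteDimensional ℂ (LinearMap.ker (S : X →ₗ[ℂ] X))) : IsFredholm S := by
  obtain ⟨n, -, -, -, hq⟩ := hS
  rw [ContinuousLinearMap.toLinearMap_pow, ContinuousLinearMap.toLinearMap_pow] at hq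
  have := (S : X →ₗ[ℂ] X).finiteDimensional_quotient_range_of_range_pow n hq
  exact ⟨hker, S.isClosed_range_of_finiteDimensional_quotient, inferInstance⟩

theorem stmt0_general (T : X →L[ℂ] X)
    (h : spectrum ℂ T \ sigma_bf T = leftPoles T) :
    spectrum ℂ T \ sigma_e T = leftPoles0 T := by
  ext l
  constructor
  · rintro ⟨hσ, hnotσe⟩
    have hFred : IsFredholm (T - l • 1) := not_not.mp hnotσe
    exact ⟨h ▸ ⟨hσ, fun hbf => hbf hFred.isBFredholm⟩, hFred.1⟩
  · rintro ⟨hlp, hker⟩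
    obtain ⟨hσ, hnotσbf⟩ : l ∈ spectrum ℂ T \ sigma_bf T := h ▸ hlp
    exact ⟨hσ, fun he => he ((not_not.mp hnotσbf).isFredholm hker)⟩

/-- If `T ∈ (gab_e)` (on an infinite-dimensional complex Banach space),
then `T ∈ (ab_e)`. -/
theorem stmt0 (hX : ¬ FiniteDimensional ℂ X) (T : X →L[ℂ] X)
    (h : spectrum ℂ T \ sigma_bf T = leftPoles T) :
    spectrum ℂ T \ sigma_e T = leftPoles0 T :=
  stmt0_general T h
end

section
/- Let T be the weighted shift operator on ℓ²(ℕ) defined by T(x₁,x₂,x₃,…) = (x₂/2, x₃/3, x₄/4, …). Then T is compact and quasinilpotent, σ(T) = σ_e(T) = {0}, 0 is an eigenvalue of T of finite multiplicity, and T does not belong to class (aw_e). -/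
open Filter Topology

variable {X : Type*} [NormedAddCommGroup X] [NormedSpace ℂ X] [CompleteSpace X]

/-! The weights `1/(n+2)` tend to `0`, so `T` is the norm limit of its finite-rank truncations and
hence compact. Iterating the coordinate formula gives `‖Tⁿ‖ ≤ 1/n!`, so every spectral value `λ`
satisfies `|λ|ⁿ ≤ 1/n!` for all `n` and `σ(T) = {0}`; as `σ_e(T)` and `σ_a(T)` lie in `σ(T)`,
both are at most `{0}`. At `0`: `ker T = ℂ e₀`, so `0` is an isolated point of `σ_a(T) = {0}` and
lies in `E_a⁰(T)`; and the range of `T` contains every `eᵢ` but not `(1/(n+2))ₙ`, whose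
preimage would be `1` from index `1` on, so it is not closed and `T` is not Fredholm. Hence
`σ(T) \ σ_e(T) = ∅` while `0 ∈ E_a⁰(T)`. -/

open scoped ENNReal lp

namespace lp

variable {ι κ : Type*}

theorem norm_le_mul_norm_of_norm_apply_le {F G : Type*} [NormedAddCommGroup F]
    [NormedAddCommGroup G] {p : ℝ≥0∞} (hp : 0 < p.toReal) {f : lp (fun _ : ι => F) p}
    {g : lp (fun _ : κ => G) p} {C : ℝ} (hC : 0 ≤ C) {σ : ι → κ} (hσ : σ.Injective)
    (h : ∀ i, ‖f i‖ ≤ C * ‖g (σ i)‖) : ‖f‖ ≤ C * ‖g‖ := by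
  refine norm_le_of_tsum_le hp (mul_nonneg hC (norm_nonneg' g)) ?_
  rw [Real.mul_rpow hC (norm_nonneg' g), norm_rpow_eq_tsum hp g, ← tsum_mul_left]
  refine ((lp.memℓp f).summable hp).tsum_le_tsum_of_inj σ hσ
    (fun _ _ => mul_nonneg (Real.rpow_nonneg hC _) (Real.rpow_nonneg (norm_nonneg _) _))
    (fun i => ?_) (((lp.memℓp g).summable hp).mul_left _)
  rw [← Real.mul_rpow hC (norm_nonneg _)]
  exact Real.rpow_le_rpow (norm_nonneg _) (h i) hp.le

section truncate

variable {𝕜 : Type*} [NormedField 𝕜] {E : ι → Type*} [∀ i, NormedAddCommGroup (E i)]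
  [∀ i, NormedSpace 𝕜 (E i)] {p : ℝ≥0∞} [Fact (1 ≤ p)] [DecidableEq ι]

variable (𝕜 E p) in
noncomputable def truncate (s : Finset ι) : lp E p →L[𝕜] lp E p :=
  ∑ i ∈ s, (singleContinuousLinearMap 𝕜 E p i).comp (evalCLM 𝕜 E p i)

theorem truncate_apply (s : Finset ι) (x : lp E p) (i : ι) :
    truncate 𝕜 E p s x i = if i ∈ s then x i else 0 := by
  simp only [truncate, _root_.sum_apply, coeFn_sum, Finset.sum_apply,
    ContinuousLinearMap.comp_apply, singleContinuousLinearMap_apply, lp.single_apply]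
  exact Finset.sum_pi_single i (fun j => evalCLM 𝕜 E p j x) s

theorem isCompactOperator_truncate [∀ i, LocallyCompactSpace (E i)] (s : Finset ι) :
    IsCompactOperator (truncate 𝕜 E p s) :=
  Submodule.sum_mem (compactOperator (RingHom.id 𝕜) _ _) fun i _ =>
    (isCompactOperator_of_locallyCompactSpace_dom (evalCLM 𝕜 E p i)).clm_comp
      (singleContinuousLinearMap 𝕜 E p i)

theorem eq_top_of_isClosed_of_forall_single_mem (hp : p ≠ ∞) {S : Submodule 𝕜 (lp E p)}
    (hS : IsClosed (S : Set (lp E p))) (h : ∀ i a, lp.single p i a ∈ S) : S = ⊤ :=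
  Submodule.eq_top_iff'.mpr fun y => hS.mem_of_tendsto (lp.hasSum_single hp y)
    (Eventually.of_forall fun _ => S.sum_mem fun i _ => h i (y i))

end truncate

theorem isCompactOperator_of_norm_apply_le {𝕜 : Type*} [NontriviallyNormedField 𝕜]
    {p : ℝ≥0∞} [Fact (1 ≤ p)] (hp : p ≠ ∞) {F G : Type*}
    [NormedAddCommGroup F] [NormedSpace 𝕜 F] [NormedAddCommGroup G] [NormedSpace 𝕜 G]
    [ProperSpace G] {T : lp (fun _ : ι => F) p →L[𝕜] lp (fun _ : κ => G) p} {c : κ → ℝ}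
    (hc : Tendsto c cofinite (𝓝 0)) {σ : κ → ι} (hσ : σ.Injective)
    (hT : ∀ x k, ‖T x k‖ ≤ c k * ‖x (σ k)‖) : IsCompactOperator T := by
  classical
  refine isCompactOperator_of_tendsto (l := atTop)
    (F := fun s : Finset κ => (truncate 𝕜 (fun _ : κ => G) p s).comp T) ?_
    (Eventually.of_forall fun s => ((isCompactOperator_truncate (𝕜 := 𝕜) s).comp_clm T :))
  rw [Metric.tendsto_nhds]
  intro ε hε
  have hε2 := half_pos hε
  have hfin : {k | ¬ c k < ε / 2}.Finite :=
    eventually_cofinite.mp (hc.eventually (gt_mem_nhds hε2))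
  filter_upwards [eventually_ge_atTop hfin.toFinset] with s hs
  rw [dist_eq_norm']
  refine (ContinuousLinearMap.opNorm_le_bound _ hε2.le fun x => ?_).trans_lt (half_lt_self hε)
  have hp' : 0 < p.toReal := ENNReal.toReal_pos (zero_lt_one.trans_le Fact.out).ne' hp
  refine norm_le_mul_norm_of_norm_apply_le hp' hε2.le hσ fun k => ?_
  rw [_root_.sub_apply, ContinuousLinearMap.comp_apply, coeFn_sub, Pi.sub_apply,
    truncate_apply]
  split_ifs with hk
  · rw [sub_self, _root_.norm_zero]
    positivity
  · have hck : c k < ε / 2 := not_not.mp fun h => hk (hs (hfin.mem_toFinset.mpr h))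
    rw [sub_zero]
    exact (hT x k).trans (mul_le_mul_of_nonneg_right hck.le (norm_nonneg _))

end lp

theorem spectrum_subset_singleton_zero_of_norm_pow_le {𝕜 A : Type*} [NormedField 𝕜]
    [NormedRing A] [NormedAlgebra 𝕜 A] [CompleteSpace A] [NormOneClass A] {a : A}
    (h : ∀ n, ‖a ^ n‖ ≤ (n.factorial : ℝ)⁻¹) : spectrum 𝕜 a ⊆ {0} := by
  intro l hl
  by_contra hl0
  have hpos : 0 < ‖l‖ := norm_pos_iff.mpr hl0
  obtain ⟨n, hn⟩ := ((FloorSemiring.tendsto_pow_div_factorial_atTop ‖l‖⁻¹).eventually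
    (gt_mem_nhds one_pos)).exists
  rw [inv_pow, div_lt_one (by positivity)] at hn
  have hpow : ‖l‖ ^ n ≤ (n.factorial : ℝ)⁻¹ := by
    rw [← norm_pow]
    exact (spectrum.norm_le_norm_of_mem (spectrum.pow_image_subset a n ⟨l, hl, rfl⟩)).trans
      (h n)
  exact (le_inv_comm₀ (by positivity) (by positivity)).mp hpow |>.not_gt hn

theorem spectrum.isUnit_sub_smul_one {R A : Type*} [CommRing R] [Ring A] [Algebra R A] {a : A}
    {r : R} (h : r ∉ spectrum R a) : IsUnit (a - r • 1) := by
  rw [spectrum.notMem_iff, Algebra.algebraMap_eq_smul_one] at h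
  simpa using h.neg

section Operator

variable {E : Type*} [NormedAddCommGroup E] [NormedSpace ℂ E] {T S : E →L[ℂ] E} {l : ℂ}

theorem isFredholm_of_isUnit (hS : IsUnit S) : IsFredholm S := by
  obtain ⟨u, rfl⟩ := hS
  have hker : LinearMap.ker (u : E →ₗ[ℂ] E) = ⊥ :=
    LinearMap.ker_eq_bot.mpr (ContinuousLinearEquiv.ofUnit u).injective
  have hrange : LinearMap.range (u : E →ₗ[ℂ] E) = ⊤ :=
    LinearMap.range_eq_top.mpr (ContinuousLinearEquiv.ofUnit u).surjective
  refine ⟨?_, ?_, ?_⟩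
  · rw [hker]; infer_instance
  · rw [hrange, Submodule.top_coe]; exact isClosed_univ
  · rw [hrange]; infer_instance

theorem sigma_e_subset_spectrum (T : E →L[ℂ] E) : sigma_e T ⊆ spectrum ℂ T :=
  fun _ hl => not_not.mp fun h => hl (isFredholm_of_isUnit (spectrum.isUnit_sub_smul_one h))

theorem sigma_a_subset_spectrum (T : E →L[ℂ] E) : sigma_a T ⊆ spectrum ℂ T := by
  intro l hl
  by_contra h
  obtain ⟨u, hu⟩ := spectrum.isUnit_sub_smul_one h
  exact hl (antilipschitzWith_iff_exists_mul_le_norm.mp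
    ⟨_, by rw [← hu]; exact (ContinuousLinearEquiv.ofUnit u).antilipschitz⟩)

theorem mem_sigma_a_of_ker_ne_bot (h : LinearMap.ker (↑(T - l • 1) : E →ₗ[ℂ] E) ≠ ⊥) :
    l ∈ sigma_a T := by
  rintro ⟨c, hc, hbound⟩
  obtain ⟨x, hx, hx0⟩ := Submodule.exists_mem_ne_zero_of_ne_bot h
  have := hbound x
  rw [show (T - l • 1) x = 0 from hx, norm_zero, ← mul_zero c] at this
  exact hx0 (norm_le_zero_iff.mp (le_of_mul_le_mul_left this hc))

end Operator

theorem mem_isoPts_singleton (a : ℂ) : a ∈ isoPts {a} :=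
  ⟨rfl, fun h => by simpa using (accPt_iff_nhds.mp h) Set.univ univ_mem⟩

theorem memℓp_inv_nat_add_two : Memℓp (fun n : ℕ => ((n + 2 : ℕ) : ℂ)⁻¹) 2 := by
  refine memℓp_gen (((summable_nat_add_iff 2).mpr
    (Real.summable_one_div_nat_pow.mpr one_lt_two)).congr fun n => ?_)
  rw [norm_inv, Complex.norm_natCast]
  simp

namespace WeightedBackwardShift

variable {T : ℓ²(ℕ, ℂ) →L[ℂ] ℓ²(ℕ, ℂ)}
  (hT : ∀ (x : ℓ²(ℕ, ℂ)) (n : ℕ), T x n = x (n + 1) / ((n + 2 : ℕ) : ℂ))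
include hT

theorem norm_apply (x : ℓ²(ℕ, ℂ)) (n : ℕ) : ‖T x n‖ = ‖x (n + 1)‖ / ((n : ℝ) + 2) := by
  rw [hT, norm_div, Complex.norm_natCast]
  push_cast
  rfl

theorem isCompactOperator : IsCompactOperator T := by
  refine lp.isCompactOperator_of_norm_apply_le ENNReal.ofNat_ne_top
    (Nat.cofinite_eq_atTop ▸ tendsto_one_div_add_atTop_nhds_zero_nat) (add_left_injective 1)
    fun x n => ?_
  rw [norm_apply hT, div_eq_inv_mul, one_div]
  gcongr
  linarith

theorem norm_pow_apply_le (n : ℕ) (x : ℓ²(ℕ, ℂ)) (k : ℕ) :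
    ‖(T ^ n) x k‖ ≤ (n.factorial : ℝ)⁻¹ * ‖x (k + n)‖ := by
  induction n generalizing x with
  | zero => simp
  | succ n ih =>
    have hfac : ((n + 1).factorial : ℝ) ≤ n.factorial * (((k + n : ℕ) : ℝ) + 2) := by
      rw [Nat.factorial_succ, Nat.cast_mul, mul_comm]
      gcongr
      push_cast
      linarith [(k.cast_nonneg : (0 : ℝ) ≤ k)]
    calc ‖(T ^ n) (T x) k‖ ≤ (n.factorial : ℝ)⁻¹ * ‖T x (k + n)‖ := ih (T x)
      _ = (n.factorial * (((k + n : ℕ) : ℝ) + 2))⁻¹ * ‖x (k + (n + 1))‖ := by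
        rw [norm_apply hT, mul_inv, ← add_assoc]
        ring
      _ ≤ ((n + 1).factorial : ℝ)⁻¹ * ‖x (k + (n + 1))‖ := by gcongr

theorem norm_pow_le (n : ℕ) : ‖T ^ n‖ ≤ (n.factorial : ℝ)⁻¹ :=
  ContinuousLinearMap.opNorm_le_bound _ (by positivity) fun x =>
    lp.norm_le_mul_norm_of_norm_apply_le (by norm_num) (by positivity) (add_left_injective n)
      (norm_pow_apply_le hT n x)

theorem ker_eq_span :
    LinearMap.ker (T : ℓ²(ℕ, ℂ) →ₗ[ℂ] ℓ²(ℕ, ℂ)) = ℂ ∙ lp.single 2 0 1 := by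
  ext x
  rw [LinearMap.mem_ker, Submodule.mem_span_singleton]
  constructor
  · intro hx
    refine ⟨x 0, lp.ext (funext fun n => ?_)⟩
    cases n with
    | zero => simp
    | succ n =>
      have hn : T x n = 0 := by rw [show T x = 0 from hx]; rfl
      rw [hT, div_eq_zero_iff] at hn
      simpa [lp.single_apply] using (hn.resolve_right (Nat.cast_ne_zero.mpr (by omega))).symm
  · rintro ⟨a, rfl⟩
    ext n
    simp [hT, lp.single_apply]

theorem single_mem_range (i : ℕ) (a : ℂ) :
    lp.single 2 i a ∈ LinearMap.range (T : ℓ²(ℕ, ℂ) →ₗ[ℂ] ℓ²(ℕ, ℂ)) := by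
  refine ⟨lp.single 2 (i + 1) ((i + 2 : ℕ) * a), lp.ext (funext fun n => ?_)⟩
  change T _ n = _
  rw [hT, lp.single_apply, lp.single_apply]
  rcases eq_or_ne n i with rfl | hn
  · simp only [Pi.single_eq_same]
    exact mul_div_cancel_left₀ a (Nat.cast_ne_zero.mpr (by omega))
  · simp [hn]

theorem not_isFredholm : ¬ IsFredholm T := by
  rintro ⟨-, hclosed, -⟩
  have hrange := lp.eq_top_of_isClosed_of_forall_single_mem ENNReal.ofNat_ne_top hclosed
    (single_mem_range hT)
  obtain ⟨x, hx⟩ : (⟨_, memℓp_inv_nat_add_two⟩ : ℓ²(ℕ, ℂ)) ∈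
      LinearMap.range (T : ℓ²(ℕ, ℂ) →ₗ[ℂ] ℓ²(ℕ, ℂ)) :=
    hrange ▸ Submodule.mem_top
  have hx1 (n : ℕ) : x (n + 1) = 1 := by
    have hn : T x n = ((n + 2 : ℕ) : ℂ)⁻¹ := congrArg (fun y : ℓ²(ℕ, ℂ) => y n) hx
    have hn2 : ((n + 2 : ℕ) : ℂ) ≠ 0 := Nat.cast_ne_zero.mpr (by omega)
    rwa [hT, div_eq_iff hn2, inv_mul_cancel₀ hn2] at hn
  have hx0 := (tendsto_add_atTop_iff_nat 1).mpr
    ((lp.memℓp x).summable (by norm_num : 0 < (2 : ℝ≥0∞).toReal)).tendsto_atTop_zero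
  simp [hx1] at hx0

theorem ker_ne_bot : LinearMap.ker (T : ℓ²(ℕ, ℂ) →ₗ[ℂ] ℓ²(ℕ, ℂ)) ≠ ⊥ := by
  rw [ker_eq_span hT, Ne, Submodule.span_singleton_eq_bot]
  intro h
  simpa using congrArg (fun y : ℓ²(ℕ, ℂ) => y 0) h

theorem finiteDimensional_ker :
    FiniteDimensional ℂ (LinearMap.ker (T : ℓ²(ℕ, ℂ) →ₗ[ℂ] ℓ²(ℕ, ℂ))) := by
  rw [ker_eq_span hT]
  infer_instance

theorem zero_mem_sigma_a : 0 ∈ sigma_a T :=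
  mem_sigma_a_of_ker_ne_bot (by rw [zero_smul, sub_zero]; exact ker_ne_bot hT)

theorem spectrum_eq : spectrum ℂ T = {0} := by
  obtain ⟨x, -, hx⟩ := Submodule.exists_mem_ne_zero_of_ne_bot (ker_ne_bot hT)
  have : Nontrivial ℓ²(ℕ, ℂ) := nontrivial_of_ne x 0 hx
  exact (spectrum_subset_singleton_zero_of_norm_pow_le (norm_pow_le hT)).antisymm
    (Set.singleton_subset_iff.mpr (sigma_a_subset_spectrum T (zero_mem_sigma_a hT)))

theorem sigma_e_eq : sigma_e T = {0} := by
  refine ((sigma_e_subset_spectrum T).trans (spectrum_eq hT).subset).antisymm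
    (Set.singleton_subset_iff.mpr ?_)
  show ¬ IsFredholm (T - (0 : ℂ) • 1)
  rw [zero_smul, sub_zero]
  exact not_isFredholm hT

theorem sigma_a_eq : sigma_a T = {0} :=
  ((sigma_a_subset_spectrum T).trans (spectrum_eq hT).subset).antisymm
    (Set.singleton_subset_iff.mpr (zero_mem_sigma_a hT))

theorem zero_mem_Ea0 : 0 ∈ Ea0 T := by
  refine ⟨sigma_a_eq hT ▸ mem_isoPts_singleton 0, ?_⟩
  rw [zero_smul, sub_zero]
  exact ⟨ker_ne_bot hT, finiteDimensional_ker hT⟩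

end WeightedBackwardShift

/-- the weighted backward shift `T(x₁,x₂,x₃,…) = (x₂/2, x₃/3, x₄/4, …)`
on `ℓ²(ℕ)` is compact and quasinilpotent, `σ(T) = σ_e(T) = {0}`, `0` is an eigenvalue of
finite multiplicity, and `T ∉ (aw_e)`. -/
theorem stmt19 (T : lp (fun _ : ℕ => ℂ) 2 →L[ℂ] lp (fun _ : ℕ => ℂ) 2)
    (hT : ∀ (x : lp (fun _ : ℕ => ℂ) 2) (n : ℕ), T x n = x (n + 1) / ((n + 2 : ℕ) : ℂ)) :
    IsCompactOperator T ∧ spectrum ℂ T = {0} ∧ sigma_e T = {0} ∧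
      (LinearMap.ker (T : lp (fun _ : ℕ => ℂ) 2 →ₗ[ℂ] lp (fun _ : ℕ => ℂ) 2) ≠ ⊥ ∧ FiniteDimensional ℂ (LinearMap.ker (T : lp (fun _ : ℕ => ℂ) 2 →ₗ[ℂ] lp (fun _ : ℕ => ℂ) 2))) ∧
      spectrum ℂ T \ sigma_e T ≠ Ea0 T := by
  open WeightedBackwardShift in
  refine ⟨isCompactOperator hT, spectrum_eq hT, sigma_e_eq hT,
    ⟨ker_ne_bot hT, finiteDimensional_ker hT⟩, ?_⟩
  rw [spectrum_eq hT, sigma_e_eq hT, Set.sdiff_self]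
  exact (Set.nonempty_of_mem (zero_mem_Ea0 hT)).ne_empty.symm
end
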